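/- Let $b > 0$ and let $Z$ be a real random variable with $|Z| \leq b$ almost surely and, conditionally on a sub-$\sigma$-algebra $\mathcal{A}$, $\mathbb{E}[Z \mid \mathcal{A}] = 0$ almost surely. Then for every $\lambda \in [0, 3/b)$, almost surely $\mathbb{E}[e^{\lambda Z} \mid \mathcal{A}] \leq \exp\big(\psi(\lambda)\,\mathbb{E}[Z^2 \mid \mathcal{A}]\big)$, where $\psi(\lambda) = \tfrac{\lambda^2}{2(1 - \lambda b/3)}$. -/

import Mathlib

open MeasureTheory

private lemma one_sub_mul_exp_le (x : ℝ) : (1 - x) * Real.exp x ≤ 1 := by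
  have h : (1 - x) ≤ Real.exp (-x) := by linarith [Real.add_one_le_exp (-x)]
  calc (1 - x) * Real.exp x ≤ Real.exp (-x) * Real.exp x :=
        mul_le_mul_of_nonneg_right h (Real.exp_pos x).le
    _ = 1 := by rw [← Real.exp_add]; simp

private lemma g_deriv (x : ℝ) :
    HasDerivAt (fun y : ℝ => 2 + y - (2 - y) * Real.exp y)
      (1 - (1 - x) * Real.exp x) x := by
  have h1 : HasDerivAt (fun y : ℝ => 2 + y) 1 x := by
    simpa using (hasDerivAt_id' x).const_add (2:ℝ)
  have h2 : HasDerivAt (fun y : ℝ => (2 - y) * Real.exp y)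
      ((0 - 1) * Real.exp x + (2 - x) * Real.exp x) x :=
    (((hasDerivAt_const x (2:ℝ)).sub (hasDerivAt_id' x)).mul (Real.hasDerivAt_exp x))
  have := h1.fun_sub h2
  refine this.congr_deriv ?_
  ring

private lemma g_mono : Monotone (fun y : ℝ => 2 + y - (2 - y) * Real.exp y) := by
  apply monotone_of_hasDerivAt_nonneg (f' := fun x => 1 - (1 - x) * Real.exp x) g_deriv
  intro x
  simp only [Pi.zero_apply]
  linarith [one_sub_mul_exp_le x]

private lemma g_sign_nonneg {x : ℝ} (hx : 0 ≤ x) :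
    0 ≤ 2 + x - (2 - x) * Real.exp x := by
  have := g_mono hx
  simpa using this

private lemma g_sign_nonpos {x : ℝ} (hx : x ≤ 0) :
    2 + x - (2 - x) * Real.exp x ≤ 0 := by
  have := g_mono hx
  simpa using this

private lemma f_deriv (x : ℝ) :
    HasDerivAt (fun y : ℝ => 2 + 4 * y / 3 + y ^ 2 / 3 - 2 * (1 - y / 3) * Real.exp y)
      ((2 / 3) * (2 + x - (2 - x) * Real.exp x)) x := by
  have h1 : HasDerivAt (fun y : ℝ => 2 + 4 * y / 3 + y ^ 2 / 3) (4 / 3 + 2 * x / 3) x := by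
    have hp : HasDerivAt (fun y : ℝ => y ^ 2) (2 * x) x := by
      simpa using hasDerivAt_pow 2 x
    have : HasDerivAt (fun y : ℝ => 2 + 4 * y / 3 + y ^ 2 / 3)
        (0 + 4 * 1 / 3 + 2 * x / 3) x :=
      ((hasDerivAt_const x (2:ℝ)).add
        (((hasDerivAt_id' x).const_mul 4).div_const 3)).add (hp.div_const 3)
    convert this using 1; ring
  have h2 : HasDerivAt (fun y : ℝ => 2 * (1 - y / 3) * Real.exp y)
      ((2 * (0 - 1 / 3)) * Real.exp x + 2 * (1 - x / 3) * Real.exp x) x := by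
    have hg : HasDerivAt (fun y : ℝ => 2 * (1 - y / 3)) (2 * (0 - 1 / 3)) x := by
      exact ((hasDerivAt_const x (1:ℝ)).sub ((hasDerivAt_id x).div_const 3)).const_mul 2
    exact hg.mul (Real.hasDerivAt_exp x)
  have := h1.fun_sub h2
  refine this.congr_deriv ?_
  ring

private lemma f_nonneg (x : ℝ) :
    0 ≤ 2 + 4 * x / 3 + x ^ 2 / 3 - 2 * (1 - x / 3) * Real.exp x := by
  set f : ℝ → ℝ := fun y => 2 + 4 * y / 3 + y ^ 2 / 3 - 2 * (1 - y / 3) * Real.exp y with hf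
  have hf0 : f 0 = 0 := by simp [hf]
  rcases le_total 0 x with hx | hx
  · have hm : MonotoneOn f (Set.Ici 0) := by
      apply monotoneOn_of_hasDerivWithinAt_nonneg (convex_Ici 0)
        (f' := fun y => (2 / 3) * (2 + y - (2 - y) * Real.exp y))
      · intro y hy
        exact (f_deriv y).continuousAt.continuousWithinAt
      · intro y hy
        exact (f_deriv y).hasDerivWithinAt
      · intro y hy
        rw [interior_Ici] at hy
        have := g_sign_nonneg (le_of_lt hy)
        nlinarith
    have := hm (Set.self_mem_Ici) (Set.mem_Ici.mpr hx) hx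
    rw [hf0] at this
    exact this
  · have hm : AntitoneOn f (Set.Iic 0) := by
      apply antitoneOn_of_hasDerivWithinAt_nonpos (convex_Iic 0)
        (f' := fun y => (2 / 3) * (2 + y - (2 - y) * Real.exp y))
      · intro y hy
        exact (f_deriv y).continuousAt.continuousWithinAt
      · intro y hy
        exact (f_deriv y).hasDerivWithinAt
      · intro y hy
        rw [interior_Iic] at hy
        have := g_sign_nonpos (le_of_lt hy)
        nlinarith
    have := hm (Set.mem_Iic.mpr hx) (Set.self_mem_Iic) hx
    rw [hf0] at this
    exact this

/-- Key pointwise inequality: `e^x ≤ 1 + x + x²/(2(1-x/3))` for `x < 3`. -/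
private lemma exp_le_bernstein {x : ℝ} (hx : x < 3) :
    Real.exp x ≤ 1 + x + x ^ 2 / (2 * (1 - x / 3)) := by
  have hden : 0 < 2 * (1 - x / 3) := by linarith
  have hf := f_nonneg x
  have h2 : Real.exp x - (1 + x) ≤ x ^ 2 / (2 * (1 - x / 3)) := by
    rw [le_div_iff₀ hden]
    nlinarith [hf]
  linarith

/-- Conditional Bernstein mgf bound for a bounded, conditionally centered random
variable, with the sub-gamma rate function `ψ(λ) = λ²/(2(1-λb/3))`. -/
theorem conditional_bernstein_mgf
    {Ω : Type*} (𝒜 : MeasurableSpace Ω) [m0 : MeasurableSpace Ω] (μ : Measure Ω) [IsProbabilityMeasure μ]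
    (h𝒜 : 𝒜 ≤ m0)
    (Z : Ω → ℝ) (hZ : Measurable Z) (b : ℝ) (hb : 0 < b)
    (hbdd : ∀ᵐ ω ∂μ, |Z ω| ≤ b)
    (hcond : condExp 𝒜 μ Z =ᵐ[μ] 0)
    (l : ℝ) (hl : l ∈ Set.Ico 0 (3 / b)) :
    ∀ᵐ ω ∂μ,
      condExp 𝒜 μ (fun ω' => Real.exp (l * Z ω')) ω ≤
        Real.exp (l ^ 2 / (2 * (1 - l * b / 3)) * condExp 𝒜 μ (fun ω' => (Z ω') ^ 2) ω) := by
  obtain ⟨hl0, hl3⟩ := hl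
  have hlb : l * b < 3 := by
    rw [lt_div_iff₀ hb] at hl3
    linarith
  have hden : 0 < 1 - l * b / 3 := by linarith
  set ψ : ℝ := l ^ 2 / (2 * (1 - l * b / 3)) with hψ
  have hZ0 : @Measurable Ω ℝ m0 _ Z := hZ
  -- Integrability facts
  have hintZ : Integrable Z μ := by
    refine Integrable.mono' (integrable_const b) (hZ0.aestronglyMeasurable (μ := μ)) ?_
    filter_upwards [hbdd] with ω h using by simpa [Real.norm_eq_abs] using h
  have hintZ2 : Integrable (fun ω => (Z ω) ^ 2) μ := by
    refine Integrable.mono' (integrable_const (b ^ 2)) ((hZ0.pow_const 2).aestronglyMeasurable (μ := μ)) ?_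
    filter_upwards [hbdd] with ω h
    rw [Real.norm_eq_abs, abs_pow]
    exact pow_le_pow_left₀ (abs_nonneg _) h 2
  have hintExp : Integrable (fun ω => Real.exp (l * Z ω)) μ := by
    refine Integrable.mono' (integrable_const (Real.exp (l * b)))
      (((hZ0.const_mul l).exp).aestronglyMeasurable (μ := μ)) ?_
    filter_upwards [hbdd] with ω h
    rw [Real.norm_eq_abs, abs_of_pos (Real.exp_pos _)]
    apply Real.exp_le_exp.mpr
    have : Z ω ≤ b := (abs_le.mp h).2
    exact mul_le_mul_of_nonneg_left this hl0
  have hintlZ : Integrable (fun ω => l * Z ω) μ := hintZ.const_mul l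
  have hintψZ2 : Integrable (fun ω => ψ * (Z ω) ^ 2) μ := hintZ2.const_mul ψ
  have hint1lZ : Integrable (fun ω => 1 + l * Z ω) μ := (integrable_const 1).add hintlZ
  have hintRHS : Integrable (fun ω => 1 + l * Z ω + ψ * (Z ω) ^ 2) μ := hint1lZ.add hintψZ2
  -- Pointwise a.e. inequality
  have hpt : (fun ω => Real.exp (l * Z ω)) ≤ᵐ[μ]
      (fun ω => 1 + l * Z ω + ψ * (Z ω) ^ 2) := by
    filter_upwards [hbdd] with ω h
    set x := l * Z ω with hx
    have hxb : x ≤ l * b := mul_le_mul_of_nonneg_left (abs_le.mp h).2 hl0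
    have hx3 : x < 3 := lt_of_le_of_lt hxb hlb
    have h1 := exp_le_bernstein hx3
    have hdx : 0 < 2 * (1 - x / 3) := by linarith
    have h2 : x ^ 2 / (2 * (1 - x / 3)) ≤ x ^ 2 / (2 * (1 - l * b / 3)) := by
      apply div_le_div_of_nonneg_left (sq_nonneg x) (by linarith)
      linarith
    have h3 : x ^ 2 / (2 * (1 - l * b / 3)) = ψ * (Z ω) ^ 2 := by
      rw [hψ, hx]
      ring
    linarith [h1, h2, h3.symm.le, h3.le]
  -- Conditional expectation step
  have hmono := condExp_mono (m := 𝒜) hintExp hintRHS hpt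
  have hadd1 : condExp 𝒜 μ (fun ω => 1 + l * Z ω + ψ * (Z ω) ^ 2) =ᵐ[μ]
      condExp 𝒜 μ (fun ω => 1 + l * Z ω) + condExp 𝒜 μ (fun ω => ψ * (Z ω) ^ 2) :=
    condExp_add hint1lZ hintψZ2 𝒜
  have hadd2 : condExp 𝒜 μ (fun ω => 1 + l * Z ω) =ᵐ[μ]
      condExp 𝒜 μ (fun _ => (1:ℝ)) + condExp 𝒜 μ (fun ω => l * Z ω) :=
    condExp_add (integrable_const 1) hintlZ 𝒜
  have hconst : condExp 𝒜 μ (fun _ => (1:ℝ)) = fun _ => (1:ℝ) := condExp_const h𝒜 1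
  have hsmul1 : condExp 𝒜 μ (fun ω => l * Z ω) =ᵐ[μ] fun ω => l * condExp 𝒜 μ Z ω := by
    have := condExp_smul (m := 𝒜) (μ := μ) (l : ℝ) Z
    filter_upwards [this] with ω h
    simpa [Pi.smul_def] using h
  have hsmul2 : condExp 𝒜 μ (fun ω => ψ * (Z ω) ^ 2) =ᵐ[μ]
      fun ω => ψ * condExp 𝒜 μ (fun ω' => (Z ω') ^ 2) ω := by
    have := condExp_smul (m := 𝒜) (μ := μ) (ψ : ℝ) (fun ω => (Z ω) ^ 2)
    filter_upwards [this] with ω h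
    simpa [Pi.smul_def] using h
  filter_upwards [hmono, hadd1, hadd2, hsmul1, hsmul2, hcond] with ω h₁ h₂ h₃ h₄ h₅ h₆
  have hZ0 : condExp 𝒜 μ Z ω = 0 := h₆
  have : condExp 𝒜 μ (fun ω' => Real.exp (l * Z ω')) ω ≤
      1 + ψ * condExp 𝒜 μ (fun ω' => (Z ω') ^ 2) ω := by
    have e1 : condExp 𝒜 μ (fun ω' => 1 + l * Z ω' + ψ * (Z ω') ^ 2) ω =
        condExp 𝒜 μ (fun ω' => 1 + l * Z ω') ω + condExp 𝒜 μ (fun ω' => ψ * (Z ω') ^ 2) ω := h₂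
    have e2 : condExp 𝒜 μ (fun ω' => 1 + l * Z ω') ω =
        condExp 𝒜 μ (fun _ => (1:ℝ)) ω + condExp 𝒜 μ (fun ω' => l * Z ω') ω := h₃
    have e3 : condExp 𝒜 μ (fun _ => (1:ℝ)) ω = 1 := by rw [hconst]
    calc condExp 𝒜 μ (fun ω' => Real.exp (l * Z ω')) ω
        ≤ condExp 𝒜 μ (fun ω' => 1 + l * Z ω' + ψ * (Z ω') ^ 2) ω := h₁
      _ = 1 + ψ * condExp 𝒜 μ (fun ω' => (Z ω') ^ 2) ω := by
          rw [e1, e2, e3, h₄, h₅, hZ0]; ring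
  calc condExp 𝒜 μ (fun ω' => Real.exp (l * Z ω')) ω
      ≤ 1 + ψ * condExp 𝒜 μ (fun ω' => (Z ω') ^ 2) ω := this
    _ ≤ Real.exp (ψ * condExp 𝒜 μ (fun ω' => (Z ω') ^ 2) ω) := by
        linarith [Real.add_one_le_exp (ψ * condExp 𝒜 μ (fun ω' => (Z ω') ^ 2) ω)]
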